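/- arXiv:2411.05440 — 2 statements merged into one kernel-verified Lean document; each statement's English description precedes it below -/
import Mathlib

section
/- Fix N ≥ 1, an index j ∈ {1,…,N}, noise power η² > 0, c = (log 10)/10, means μ ∈ ℝ^N, standard deviations σ ∈ ℝ^N with σ_k ≥ 0 for all k, q ∈ ℝ^N, u ∈ ℝ and b > 0, and define F(ρ) = log( η²·exp(−c(μ_j + ρ_j σ_j) − q_j − u/b) + ∑_{k≠j} exp( c(μ_k + ρ_k σ_k − μ_j − ρ_j σ_j) + q_k − q_j − u/b ) ). Let ρ̲, ρ̄ ∈ ℝ^N with ρ̲_k ≤ ρ̄_k for all k, and let ρ* ∈ ℝ^N be the worst-case corner defined by ρ*_j = ρ̲_j and ρ*_k = ρ̄_k for k ≠ j. Then for every ρ ∈ ℝ^N with ρ_k ∈ [ρ̲_k, ρ̄_k] for all k, one has F(ρ) ≤ F(ρ*). In particular, if F(ρ*) ≤ A for some A ∈ ℝ, then F(ρ) ≤ A for all ρ in the box. -/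
open Real Finset

/-- **Worst-case corner of the uncertainty box.** The robust constraint function
`F` is maximized over the box `ρ k ∈ [lo k, hi k]` at the corner
`ρ* j = lo j`, `ρ* k = hi k` for `k ≠ j`; in particular `F ρ* ≤ A` implies
`F ρ ≤ A` for every `ρ` in the box. -/
theorem robust_constraint_worst_case_corner
    (N : ℕ) (hN : 1 ≤ N) (j : Fin N)
    (η2 : ℝ) (hη : 0 < η2)
    (c : ℝ) (hc : c = Real.log 10 / 10)
    (μ σ : Fin N → ℝ) (hσ : ∀ k, 0 ≤ σ k)
    (q : Fin N → ℝ) (u b : ℝ) (hb : 0 < b)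
    (F : (Fin N → ℝ) → ℝ)
    (hF : F = fun ρ =>
      Real.log (η2 * Real.exp (-(c * (μ j + ρ j * σ j)) - q j - u / b) +
        ∑ k ∈ Finset.univ.erase j,
          Real.exp (c * (μ k + ρ k * σ k - μ j - ρ j * σ j) + q k - q j - u / b)))
    (lo hi : Fin N → ℝ) (hlohi : ∀ k, lo k ≤ hi k)
    (ρstar : Fin N → ℝ)
    (hρstar : ρstar = fun k => if k = j then lo j else hi k) :
    (∀ ρ : Fin N → ℝ, (∀ k, ρ k ∈ Set.Icc (lo k) (hi k)) → F ρ ≤ F ρstar) ∧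
    (∀ A : ℝ, F ρstar ≤ A →
      ∀ ρ : Fin N → ℝ, (∀ k, ρ k ∈ Set.Icc (lo k) (hi k)) → F ρ ≤ A) := by
  have hc0 : 0 ≤ c := by
    rw [hc]
    have : 0 ≤ Real.log 10 := Real.log_nonneg (by norm_num)
    linarith
  have key : ∀ ρ : Fin N → ℝ, (∀ k, ρ k ∈ Set.Icc (lo k) (hi k)) → F ρ ≤ F ρstar := by
    intro ρ hρ
    subst hF hρstar
    beta_reduce
    apply Real.log_le_log
    · positivity
    · simp only [if_pos rfl, if_true]
      gcongr η2 * Real.exp ?_ + ∑ k ∈ Finset.univ.erase j, ?_ with k hk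
      · -- exponent for noise term
        have h1 : lo j ≤ ρ j := (hρ j).1
        have := mul_le_mul_of_nonneg_left (mul_le_mul_of_nonneg_right h1 (hσ j)) hc0
        linarith
      · rw [Finset.mem_erase] at hk
        rw [if_neg hk.1]
        apply Real.exp_le_exp.2
        have h1 : lo j ≤ ρ j := (hρ j).1
        have h2 : ρ k ≤ hi k := (hρ k).2
        have t1 := mul_le_mul_of_nonneg_left (mul_le_mul_of_nonneg_right h1 (hσ j)) hc0
        have t2 := mul_le_mul_of_nonneg_left (mul_le_mul_of_nonneg_right h2 (hσ k)) hc0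
        nlinarith
  exact ⟨key, fun A hA ρ hρ => (key ρ hρ).trans hA⟩
end

section
/- (Theorem 1.) Fix N ≥ 1, an index j ∈ {1,…,N}, noise power η² > 0, c = (log 10)/10, means μ ∈ ℝ^N, standard deviations σ ∈ ℝ^N with σ_k ≥ 0 for all k, q ∈ ℝ^N, u ∈ ℝ, b > 0, A ∈ ℝ, M ≥ 0 and z̄ ∈ {0,1}, and define F(ρ) = log( η²·exp(−c(μ_j + ρ_j σ_j) − q_j − u/b) + ∑_{k≠j} exp( c(μ_k + ρ_k σ_k − μ_j − ρ_j σ_j) + q_k − q_j − u/b ) ). Let ρ̲, ρ̄ ∈ ℝ^N with ρ̲_k ≤ ρ̄_k, let ρ* be defined by ρ*_j = ρ̲_j and ρ*_k = ρ̄_k for k ≠ j, and suppose the robust constraint F(ρ*) ≤ A + M·z̄ holds. Let ρ_1, …, ρ_N be independent random variables on a probability space, each with law gaussianReal 0 1. Then P( F(ρ_1,…,ρ_N) ≤ A + M·z̄ ) ≥ ∏_{k=1}^N P( ρ_k ∈ [ρ̲_k, ρ̄_k] ). In particular, if the box is chosen so that ∏_{k=1}^N P(ρ_k ∈ [ρ̲_k,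 ρ̄_k]) = 1 − α, then the chance constraint P(F(ρ) ≤ A + M·z̄) ≥ 1 − α of the stochastic problem is satisfied. -/
open MeasureTheory ProbabilityTheory Real Finset

/-- **Theorem 1.** If the robust constraint `F ρ* ≤ A + M z̄` holds at the
worst-case corner `ρ*` of the box `[lo, hi]`, and `ρ 1, …, ρ N` are independent
standard normal variables, then the chance constraint holds with probability at
least `∏ k, P(ρ k ∈ [lo k, hi k])`; in particular, if the box is chosen so that
this product equals `1 - α`, the chance constraint of the stochastic problem is
satisfied with probability at least `1 - α`. -/
theorem robust_MIGP_implies_chance_constraint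
    {Ω : Type*} [MeasurableSpace Ω] (P : Measure Ω) [IsProbabilityMeasure P]
    (N : ℕ) (hN : 1 ≤ N) (j : Fin N)
    (η2 : ℝ) (hη : 0 < η2)
    (c : ℝ) (hc : c = Real.log 10 / 10)
    (μ σ : Fin N → ℝ) (hσ : ∀ k, 0 ≤ σ k)
    (q : Fin N → ℝ) (u b : ℝ) (hb : 0 < b)
    (A M zbar : ℝ) (hM : 0 ≤ M) (hz : zbar = 0 ∨ zbar = 1)
    (F : (Fin N → ℝ) → ℝ)
    (hF : F = fun ρ =>
      Real.log (η2 * Real.exp (-(c * (μ j + ρ j * σ j)) - q j - u / b) +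
        ∑ k ∈ Finset.univ.erase j,
          Real.exp (c * (μ k + ρ k * σ k - μ j - ρ j * σ j) + q k - q j - u / b)))
    (lo hi : Fin N → ℝ) (hlohi : ∀ k, lo k ≤ hi k)
    (ρstar : Fin N → ℝ)
    (hρstar : ρstar = fun k => if k = j then lo j else hi k)
    (hrobust : F ρstar ≤ A + M * zbar)
    (ρ : Fin N → Ω → ℝ)
    (hmeas : ∀ k, Measurable (ρ k))
    (hindep : iIndepFun ρ P)
    (hlaw : ∀ k, Measure.map (ρ k) P = gaussianReal 0 1) :
    P {ω | F (fun k => ρ k ω) ≤ A + M * zbar} ≥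
      ∏ k, P {ω | ρ k ω ∈ Set.Icc (lo k) (hi k)} ∧
    ∀ α : ℝ, (∏ k, P {ω | ρ k ω ∈ Set.Icc (lo k) (hi k)}) = ENNReal.ofReal (1 - α) →
      P {ω | F (fun k => ρ k ω) ≤ A + M * zbar} ≥ ENNReal.ofReal (1 - α) := by
  have hcpos : 0 < c := by
    rw [hc]
    have : 0 < Real.log 10 := Real.log_pos (by norm_num)
    linarith
  -- Monotonicity: for any x in the box, F x ≤ F ρstar
  have hmono : ∀ x : Fin N → ℝ, (∀ k, x k ∈ Set.Icc (lo k) (hi k)) →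
      F x ≤ F ρstar := by
    intro x hx
    have hyj : ρstar j = lo j := by rw [hρstar]; simp
    have hyk : ∀ k, k ≠ j → ρstar k = hi k := by
      intro k h; rw [hρstar]; simp [h]
    rw [hF]
    simp only
    have hxj : lo j ≤ x j := (hx j).1
    have h2 : c * σ j * lo j ≤ c * σ j * x j :=
      mul_le_mul_of_nonneg_left hxj (mul_nonneg hcpos.le (hσ j))
    apply Real.log_le_log (by positivity)
    apply add_le_add
    · apply mul_le_mul_of_nonneg_left _ hη.le
      apply Real.exp_le_exp.mpr
      rw [hyj]
      nlinarith
    · apply Finset.sum_le_sum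
      intro k hk
      apply Real.exp_le_exp.mpr
      rw [hyj, hyk k (Finset.mem_erase.mp hk).1]
      have h1 : c * σ k * x k ≤ c * σ k * hi k :=
        mul_le_mul_of_nonneg_left (hx k).2 (mul_nonneg hcpos.le (hσ k))
      nlinarith
  -- The box event is contained in the chance-constraint event
  have hsub : (⋂ k, ρ k ⁻¹' Set.Icc (lo k) (hi k)) ⊆
      {ω | F (fun k => ρ k ω) ≤ A + M * zbar} := by
    intro ω hω
    simp only [Set.mem_iInter, Set.mem_preimage] at hω
    exact le_trans (hmono _ hω) hrobust
  -- Independence gives the product formula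
  have hprod : P (⋂ k, ρ k ⁻¹' Set.Icc (lo k) (hi k)) =
      ∏ k, P (ρ k ⁻¹' Set.Icc (lo k) (hi k)) := by
    exact hindep.meas_iInter fun k => ⟨Set.Icc (lo k) (hi k), measurableSet_Icc, rfl⟩
  have hmain : P {ω | F (fun k => ρ k ω) ≤ A + M * zbar} ≥
      ∏ k, P {ω | ρ k ω ∈ Set.Icc (lo k) (hi k)} := by
    calc ∏ k, P {ω | ρ k ω ∈ Set.Icc (lo k) (hi k)}
        = P (⋂ k, ρ k ⁻¹' Set.Icc (lo k) (hi k)) := hprod.symm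
      _ ≤ P {ω | F (fun k => ρ k ω) ≤ A + M * zbar} := measure_mono hsub
  exact ⟨hmain, fun α hα => hα ▸ hmain⟩
end
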